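/- Let λ > 0, let c : ℝ → (0,∞) be continuous, and let Φ_c(x) = ∫₀^x dw/c(w). Then the function q(x,t) = λ I₀( λ√(t² − Φ_c(x)²) ) / (2 sinh(λt)) satisfies the non-homogeneous telegraph equation with space-varying velocity ∂²q/∂t² + 2λ coth(λt) ∂q/∂t = c(x) ∂/∂x( c(x) ∂q/∂x ) for all (x,t) with t > 0 and |Φ_c(x)| < t. -/

import Mathlib

/-!
Write `u = t² - Φ_c(x)²`. The power series `G(u) = I₀(λ√u)` is entire and, because its
coefficients satisfy `(k+1)² a_{k+1} = (λ²/4) a_k`, solves `u G'' + G' = (λ²/4) G`; moreover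
`q = (λ/2) G(u) / sinh(λt)`. Conjugating by `sinh(λt)` turns `∂ₜ² + 2λ coth(λt) ∂ₜ` into
`∂ₜ² - λ²`, and since `Φ_c' = 1/c` the operator `c ∂ₓ (c ∂ₓ ·)` acting on functions of `Φ_c(x)`
is `∂²` in the variable `Φ_c(x)`. Both sides of the equation thereby become explicit in
`G, G', G''`, and their difference is `(λ/2)(4uG'' + 4G' - λ²G) / sinh(λt) = 0`.
-/

open Real MeasureTheory

/-- Modified Bessel function of order zero, `I₀(z) = ∑ₖ (z/2)^{2k} / (k!)²`. -/
noncomputable def besselI0 (z : ℝ) : ℝ := ∑' k : ℕ, (z/2)^(2*k) / ((k.factorial : ℝ))^2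

/-- The hyperbolic cotangent. -/
noncomputable def coth (t : ℝ) : ℝ := Real.cosh t / Real.sinh t

/-- `Φ_c x = ∫₀ˣ dw / c(w)`. -/
noncomputable def Phi (c : ℝ → ℝ) (x : ℝ) : ℝ := ∫ w in (0:ℝ)..x, (c w)⁻¹

open Filter Topology

def EntireCoeffs (a : ℕ → ℝ) : Prop := ∀ r : ℝ, Summable fun k => ‖a k * r ^ k‖

noncomputable def powerSeriesSum (a : ℕ → ℝ) (u : ℝ) : ℝ := ∑' k, a k * u ^ k

def derivCoeffs (a : ℕ → ℝ) (k : ℕ) : ℝ := (k + 1) * a (k + 1)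

section EntireCoeffs

variable {a : ℕ → ℝ}

theorem EntireCoeffs.summable_mul_pow (ha : EntireCoeffs a) (u : ℝ) :
    Summable fun k => a k * u ^ k :=
  (ha u).of_norm

theorem EntireCoeffs.natCast_mul (ha : EntireCoeffs a) : EntireCoeffs fun k : ℕ => k * a k := by
  intro r
  refine (ha (2 * r)).of_nonneg_of_le (fun k => norm_nonneg _) fun k => ?_
  -- `k ≤ 2 ^ k` lets the factor `k` be absorbed by doubling the radius
  have hk : (k : ℝ) ≤ 2 ^ k := by exact_mod_cast Nat.lt_two_pow_self.le
  calc ‖(k * a k) * r ^ k‖ = k * ‖a k * r ^ k‖ := by simp [norm_mul, mul_assoc]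
    _ ≤ 2 ^ k * ‖a k * r ^ k‖ := by gcongr
    _ = ‖a k * (2 * r) ^ k‖ := by simp [norm_mul, mul_pow, mul_left_comm]

theorem entireCoeffs_derivCoeffs (ha : EntireCoeffs a) : EntireCoeffs (derivCoeffs a) := by
  intro r
  obtain ⟨R, hrR, hR⟩ : ∃ R : ℝ, ‖r‖ ≤ ‖R‖ ∧ 1 ≤ ‖R‖ :=
    ⟨‖r‖ + 1, by rw [Real.norm_of_nonneg (by positivity : (0 : ℝ) ≤ ‖r‖ + 1)]; simp⟩
  refine ((summable_nat_add_iff 1).2 (ha.natCast_mul R)).of_nonneg_of_le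
    (fun k => norm_nonneg _) fun k => ?_
  have hpow : ‖r‖ ^ k ≤ ‖R‖ ^ (k + 1) :=
    (pow_le_pow_left₀ (norm_nonneg r) hrR k).trans (pow_le_pow_right₀ hR k.le_succ)
  simp only [derivCoeffs, norm_mul, norm_pow, Nat.cast_succ]
  gcongr

theorem EntireCoeffs.hasDerivAt_powerSeriesSum (ha : EntireCoeffs a) (u : ℝ) :
    HasDerivAt (powerSeriesSum a) (powerSeriesSum (derivCoeffs a) u) u := by
  set R := ‖u‖ + 1
  have hRn : ‖R‖ = R := Real.norm_of_nonneg (by positivity : (0 : ℝ) ≤ ‖u‖ + 1)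
  have hu : u ∈ Metric.ball (0 : ℝ) R := by simp [R]
  have hbound : ∀ k : ℕ, ∀ y ∈ Metric.ball (0 : ℝ) R,
      ‖a k * ((k : ℝ) * y ^ (k - 1))‖ ≤ ‖(k * a k) * R ^ k‖ := by
    intro k y hy
    rw [mem_ball_zero_iff] at hy
    have hpow : ‖y‖ ^ (k - 1) ≤ ‖R‖ ^ k :=
      (pow_le_pow_left₀ (norm_nonneg y) (by rw [hRn]; exact hy.le) _).trans
        (pow_le_pow_right₀ (by rw [hRn]; simp [R]) (k.sub_le 1))
    calc ‖a k * ((k : ℝ) * y ^ (k - 1))‖ = k * ‖a k‖ * ‖y‖ ^ (k - 1) := by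
          simp only [norm_mul, norm_pow, Real.norm_natCast]; ring
      _ ≤ k * ‖a k‖ * ‖R‖ ^ k := by gcongr
      _ = ‖(k * a k) * R ^ k‖ := by simp only [norm_mul, norm_pow, Real.norm_natCast]
  have hderiv := hasDerivAt_tsum_of_isPreconnected (ha.natCast_mul R) Metric.isOpen_ball
    (convex_ball (0 : ℝ) R).isPreconnected
    (fun (k : ℕ) y _ => (hasDerivAt_pow k y).const_mul (a k)) hbound hu (ha.summable_mul_pow u) hu
  refine hderiv.congr_deriv ?_
  rw [(Summable.of_norm_bounded (ha.natCast_mul R) fun k => hbound k u hu).tsum_eq_zero_add]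
  simp [powerSeriesSum, derivCoeffs, mul_comm, mul_left_comm]

theorem EntireCoeffs.mul_powerSeriesSum_derivCoeffs (ha : EntireCoeffs a) (u : ℝ) :
    u * powerSeriesSum (derivCoeffs a) u = powerSeriesSum (fun k : ℕ => k * a k) u := by
  rw [powerSeriesSum, powerSeriesSum, (ha.natCast_mul.summable_mul_pow u).tsum_eq_zero_add,
    ← tsum_mul_left, Nat.cast_zero, zero_mul, zero_mul, zero_add]
  exact tsum_congr fun k => by simp only [derivCoeffs]; push_cast; ring

theorem EntireCoeffs.powerSeriesSum_ode {b : ℝ} (ha : EntireCoeffs a)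
    (hrec : ∀ k : ℕ, ((k : ℝ) + 1) ^ 2 * a (k + 1) = b * a k) (u : ℝ) :
    u * powerSeriesSum (derivCoeffs (derivCoeffs a)) u + powerSeriesSum (derivCoeffs a) u
      = b * powerSeriesSum a u := by
  have ha' := entireCoeffs_derivCoeffs ha
  rw [ha'.mul_powerSeriesSum_derivCoeffs, powerSeriesSum, powerSeriesSum, powerSeriesSum,
    ← (ha'.natCast_mul.summable_mul_pow u).tsum_add (ha'.summable_mul_pow u), ← tsum_mul_left]
  refine tsum_congr fun k => ?_
  simp only [derivCoeffs]
  linear_combination u ^ k * hrec k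

end EntireCoeffs

noncomputable def besselCoeffs (b : ℝ) (k : ℕ) : ℝ := b ^ k / (k.factorial : ℝ) ^ 2

theorem entireCoeffs_besselCoeffs (b : ℝ) : EntireCoeffs (besselCoeffs b) := by
  intro r
  refine (Real.summable_pow_div_factorial (|b| * |r|)).of_nonneg_of_le (fun k => norm_nonneg _)
    fun k => ?_
  have hfact : (1 : ℝ) ≤ k.factorial := by exact_mod_cast k.factorial_pos
  rw [besselCoeffs, norm_mul, norm_div, norm_pow, norm_pow, norm_pow, Real.norm_natCast,
    Real.norm_eq_abs, Real.norm_eq_abs, mul_pow, div_mul_eq_mul_div]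
  gcongr
  nlinarith

theorem besselCoeffs_succ (b : ℝ) (k : ℕ) :
    ((k : ℝ) + 1) ^ 2 * besselCoeffs b (k + 1) = b * besselCoeffs b k := by
  have : (k.factorial : ℝ) ≠ 0 := by positivity
  simp only [besselCoeffs, Nat.factorial_succ, Nat.cast_mul, Nat.cast_succ]
  field_simp
  ring

theorem besselI0_mul_sqrt (lam : ℝ) {u : ℝ} (hu : 0 ≤ u) :
    besselI0 (lam * √u) = powerSeriesSum (besselCoeffs (lam ^ 2 / 4)) u := by
  refine tsum_congr fun k => ?_
  rw [besselCoeffs, pow_mul, div_pow, mul_pow, Real.sq_sqrt hu, div_mul_eq_mul_div]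
  ring

theorem HasDerivAt.comp_sq_sub {G : ℝ → ℝ} {G' κ v : ℝ} (hG : HasDerivAt G G' (v ^ 2 - κ)) :
    HasDerivAt (fun v => G (v ^ 2 - κ)) (G' * (2 * v)) v :=
  hG.comp v (by simpa using (hasDerivAt_pow 2 v).sub_const κ)

theorem HasDerivAt.comp_sub_sq {G : ℝ → ℝ} {G' κ v : ℝ} (hG : HasDerivAt G G' (κ - v ^ 2)) :
    HasDerivAt (fun v => G (κ - v ^ 2)) (G' * -(2 * v)) v :=
  hG.comp v (by simpa using (hasDerivAt_pow 2 v).const_sub κ)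

theorem hasDerivAt_sinh_mul (lam s : ℝ) :
    HasDerivAt (fun s => sinh (lam * s)) (cosh (lam * s) * lam) s :=
  (hasDerivAt_sinh _).comp s (by simpa using (hasDerivAt_id s).const_mul lam)

theorem iteratedDeriv_two_add_coth_mul_deriv_of_eventuallyEq_div_sinh {lam t : ℝ}
    (ht : lam * t ≠ 0) {h g g' : ℝ → ℝ} {g'' : ℝ}
    (hh : h =ᶠ[𝓝 t] fun s => g s / sinh (lam * s))
    (hg : ∀ s, HasDerivAt g (g' s) s) (hg' : HasDerivAt g' g'' t) :
    iteratedDeriv 2 h t + 2 * lam * coth (lam * t) * deriv h t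
      = (g'' - lam ^ 2 * g t) / sinh (lam * t) := by
  have hS : sinh (lam * t) ≠ 0 := sinh_ne_zero.2 ht
  set D : ℝ → ℝ := fun s =>
    (g' s * sinh (lam * s) - g s * (cosh (lam * s) * lam)) / sinh (lam * s) ^ 2
  have hderiv : deriv h =ᶠ[𝓝 t] D := by
    have hS' : ∀ᶠ s in 𝓝 t, sinh (lam * s) ≠ 0 :=
      (hasDerivAt_sinh_mul lam t).continuousAt.eventually_ne hS
    filter_upwards [hh.deriv, hS'] with s hs hSs
    exact hs.trans ((hg s).div (hasDerivAt_sinh_mul lam s) hSs).deriv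
  have hcosh : HasDerivAt (fun s => cosh (lam * s) * lam) (sinh (lam * t) * lam * lam) t :=
    ((hasDerivAt_cosh _).comp t (by simpa using (hasDerivAt_id t).const_mul lam)).mul_const lam
  have hD := ((hg'.fun_mul (hasDerivAt_sinh_mul lam t)).fun_sub ((hg t).fun_mul hcosh)).fun_div
    ((hasDerivAt_sinh_mul lam t).fun_pow 2) (pow_ne_zero 2 hS)
  rw [iteratedDeriv_succ, iteratedDeriv_one, hderiv.deriv_eq, hD.deriv, hderiv.eq_of_nhds, coth]
  simp only [D]
  field_simp
  ring

theorem hasDerivAt_Phi {c : ℝ → ℝ} (hc : Continuous c) (hc0 : ∀ x, c x ≠ 0) (x : ℝ) :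
    HasDerivAt (Phi c) (c x)⁻¹ x :=
  ((hc.inv₀ hc0).integral_hasStrictDerivAt 0 x).hasDerivAt

theorem mul_deriv_mul_deriv_of_eventuallyEq_comp_Phi {c : ℝ → ℝ} (hc : Continuous c)
    (hc0 : ∀ x, c x ≠ 0) {x : ℝ} {F f f' : ℝ → ℝ} {f'' : ℝ}
    (hF : F =ᶠ[𝓝 x] fun y => f (Phi c y)) (hf : ∀ p, HasDerivAt f (f' p) p)
    (hf' : HasDerivAt f' f'' (Phi c x)) :
    c x * deriv (fun y => c y * deriv F y) x = f'' := by
  have hflux : (fun y => c y * deriv F y) =ᶠ[𝓝 x] fun y => f' (Phi c y) := by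
    filter_upwards [hF.deriv] with y hy
    have hcomp : HasDerivAt (fun y => f (Phi c y)) (f' (Phi c y) * (c y)⁻¹) y :=
      (hf _).comp y (hasDerivAt_Phi hc hc0 y)
    rw [hy, hcomp.deriv]
    field_simp [hc0 y]
  have hcomp : HasDerivAt (fun y => f' (Phi c y)) (f'' * (c x)⁻¹) x :=
    hf'.comp x (hasDerivAt_Phi hc hc0 x)
  rw [hflux.deriv_eq, hcomp.deriv]
  field_simp [hc0 x]

theorem iteratedDeriv_two_add_coth_mul_deriv_of_eventuallyEq_comp_sq_sub {G G1 G2 : ℝ → ℝ}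
    (hG : ∀ u, HasDerivAt G (G1 u) u) (hG1 : ∀ u, HasDerivAt G1 (G2 u) u) {lam t p : ℝ}
    (ht : lam * t ≠ 0) {h : ℝ → ℝ}
    (hh : h =ᶠ[𝓝 t] fun s => lam / 2 * G (s ^ 2 - p ^ 2) / sinh (lam * s)) :
    iteratedDeriv 2 h t + 2 * lam * coth (lam * t) * deriv h t
      = lam / 2 * (4 * t ^ 2 * G2 (t ^ 2 - p ^ 2) + 2 * G1 (t ^ 2 - p ^ 2)
          - lam ^ 2 * G (t ^ 2 - p ^ 2)) / sinh (lam * t) := by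
  rw [iteratedDeriv_two_add_coth_mul_deriv_of_eventuallyEq_div_sinh ht hh
    (fun s => (hG _).comp_sq_sub.const_mul (lam / 2))
    (((hG1 _).comp_sq_sub.fun_mul ((hasDerivAt_id' t).const_mul 2)).const_mul (lam / 2))]
  ring

theorem mul_deriv_mul_deriv_of_eventuallyEq_comp_sub_sq_Phi {G G1 G2 : ℝ → ℝ}
    (hG : ∀ u, HasDerivAt G (G1 u) u) (hG1 : ∀ u, HasDerivAt G1 (G2 u) u) {c : ℝ → ℝ}
    (hc : Continuous c) (hc0 : ∀ x, c x ≠ 0) {lam t x : ℝ} {F : ℝ → ℝ}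
    (hF : F =ᶠ[𝓝 x] fun y => lam / 2 * G (t ^ 2 - Phi c y ^ 2) / sinh (lam * t)) :
    c x * deriv (fun y => c y * deriv F y) x
      = lam / 2 * (4 * Phi c x ^ 2 * G2 (t ^ 2 - Phi c x ^ 2) - 2 * G1 (t ^ 2 - Phi c x ^ 2))
          / sinh (lam * t) := by
  rw [mul_deriv_mul_deriv_of_eventuallyEq_comp_Phi hc hc0 hF
    (fun p => ((hG _).comp_sub_sq.const_mul (lam / 2)).div_const (sinh (lam * t)))
    ((((hG1 _).comp_sub_sq.fun_mul ((hasDerivAt_id' _).const_mul 2).fun_neg).const_mul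
      (lam / 2)).div_const (sinh (lam * t)))]
  ring

theorem telegraph_coth_rate_space_varying_velocity
    (lam : ℝ) (hlam : 0 < lam)
    (c : ℝ → ℝ) (hc : Continuous c) (hcpos : ∀ x, 0 < c x)
    (q : ℝ → ℝ → ℝ)
    (hq : ∀ x, ∀ t : ℝ,
      q x t = lam * besselI0 (lam * Real.sqrt (t^2 - (Phi c x)^2))
        / (2 * Real.sinh (lam * t))) :
    ∀ x t : ℝ, 0 < t → |Phi c x| < t →
      iteratedDeriv 2 (fun s => q x s) t
        + 2 * lam * coth (lam * t) * deriv (fun s => q x s) t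
        = c x * deriv (fun y => c y * deriv (fun z => q z t) y) x := by
  intro x t ht hx
  set a := besselCoeffs (lam ^ 2 / 4)
  have ha : EntireCoeffs a := entireCoeffs_besselCoeffs _
  have hc0 : ∀ y, c y ≠ 0 := fun y => (hcpos y).ne'
  have hq_series : ∀ y s, Phi c y ^ 2 < s ^ 2 →
      q y s = lam / 2 * powerSeriesSum a (s ^ 2 - Phi c y ^ 2) / sinh (lam * s) := by
    intro y s hys
    rw [hq, besselI0_mul_sqrt lam (sub_nonneg.2 hys.le)]
    ring
  replace hx : Phi c x ^ 2 < t ^ 2 := sq_lt_sq.2 (hx.trans_eq (abs_of_pos ht).symm)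
  have htime : (fun s => q x s) =ᶠ[𝓝 t]
      fun s => lam / 2 * powerSeriesSum a (s ^ 2 - Phi c x ^ 2) / sinh (lam * s) :=
    ((continuous_pow 2).tendsto t |>.eventually (lt_mem_nhds hx)).mono fun s => hq_series x s
  have hspace : (fun z => q z t) =ᶠ[𝓝 x]
      fun z => lam / 2 * powerSeriesSum a (t ^ 2 - Phi c z ^ 2) / sinh (lam * t) :=
    ((hasDerivAt_Phi hc hc0 x).continuousAt.pow 2 |>.eventually (gt_mem_nhds hx)).mono
      fun z => hq_series z t
  have hG := ha.hasDerivAt_powerSeriesSum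
  have hG1 := (entireCoeffs_derivCoeffs ha).hasDerivAt_powerSeriesSum
  rw [iteratedDeriv_two_add_coth_mul_deriv_of_eventuallyEq_comp_sq_sub hG hG1
      (mul_ne_zero hlam.ne' ht.ne') htime,
    mul_deriv_mul_deriv_of_eventuallyEq_comp_sub_sq_Phi hG hG1 hc hc0 hspace]
  have hode := ha.powerSeriesSum_ode (besselCoeffs_succ _) (t ^ 2 - Phi c x ^ 2)
  field_simp
  linear_combination 4 * hode
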